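/- arXiv:1709.00359 — 5 statements merged into one kernel-verified Lean document; each statement's English description precedes it below -/
import Mathlib

section
/- There exists a modal space X over a language with countably infinitely many atomic propositions, together with a sequence (x_n) and a point x in X, such that (x_n) logically converges to x but does not converge to x in the n-bisimulation metric topology. -/
/-- Modal formulas over atoms `Φ` and agents `I`. -/
inductive Form (Φ I : Type) : Type
  | top : Form Φ I
  | atom : Φ → Form Φ I
  | neg : Form Φ I → Form Φ I
  | and : Form Φ I → Form Φ I → Form Φ I
  | box : I → Form Φ I → Form Φ I

/-- A Kripke model: worlds, accessibility per agent, valuation. -/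
structure KripkeModel (Φ I : Type) where
  W : Type
  R : I → W → W → Prop
  V : Φ → W → Prop

/-- Satisfaction of a formula at a world. -/
def KripkeModel.sat {Φ I : Type} (M : KripkeModel Φ I) : M.W → Form Φ I → Prop
  | _, Form.top => True
  | w, Form.atom p => M.V p w
  | w, Form.neg φ => ¬ M.sat w φ
  | w, Form.and φ ψ => M.sat w φ ∧ M.sat w ψ
  | w, Form.box i φ => ∀ v, M.R i w v → M.sat v φ

/-- A pointed Kripke model. -/
structure PointedModel (Φ I : Type) where
  M : KripkeModel Φ I
  s : M.W

def PointedModel.sat {Φ I : Type} (x : PointedModel Φ I) (φ : Form Φ I) : Prop :=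
  x.M.sat x.s φ

/-- Modal equivalence: satisfying the same formulas. -/
def modEquiv {Φ I : Type} (x y : PointedModel Φ I) : Prop :=
  ∀ φ : Form Φ I, x.sat φ ↔ y.sat φ

/-- `n`-bisimilarity of pointed models. -/
def nBisim {Φ I : Type} : ℕ → PointedModel Φ I → PointedModel Φ I → Prop
  | 0, x, y => ∀ p, x.M.V p x.s ↔ y.M.V p y.s
  | n+1, x, y => (∀ p, x.M.V p x.s ↔ y.M.V p y.s) ∧
      (∀ i t, x.M.R i x.s t → ∃ u, y.M.R i y.s u ∧ nBisim n ⟨x.M, t⟩ ⟨y.M, u⟩) ∧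
      (∀ i u, y.M.R i y.s u → ∃ t, x.M.R i x.s t ∧ nBisim n ⟨x.M, t⟩ ⟨y.M, u⟩)

/-- (Full) bisimilarity of pointed models. -/
def Bisimilar {Φ I : Type} (x y : PointedModel Φ I) : Prop :=
  ∃ Z : x.M.W → y.M.W → Prop, Z x.s y.s ∧
    (∀ s t, Z s t → ∀ p, x.M.V p s ↔ y.M.V p t) ∧
    (∀ s t, Z s t → ∀ i s', x.M.R i s s' → ∃ t', y.M.R i t t' ∧ Z s' t') ∧
    (∀ s t, Z s t → ∀ i t', y.M.R i t t' → ∃ s', x.M.R i s s' ∧ Z s' t')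

/-- The modal space over `X`: the quotient of `X` by modal equivalence. -/
def MSpace {Φ I : Type} (X : Set (PointedModel Φ I)) : Type 1 :=
  Quot (fun x y : X => modEquiv x.1 y.1)

/-- Satisfaction on the modal space (well-defined on equivalence classes). -/
def satQ {Φ I : Type} {X : Set (PointedModel Φ I)} (φ : Form Φ I) : MSpace X → Prop :=
  Quot.lift (fun x : X => x.1.sat φ) (fun _ _ h => propext (h φ))

/-- The basic opens of the Stone topology: `U_φ = {x : x ⊨ φ}`. -/
def stoneBasis {Φ I : Type} (X : Set (PointedModel Φ I)) : Set (Set (MSpace X)) :=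
  {S | ∃ φ : Form Φ I, S = {a : MSpace X | satQ φ a}}

/-- The Stone topology on a modal space. -/
def stoneTop {Φ I : Type} (X : Set (PointedModel Φ I)) : TopologicalSpace (MSpace X) :=
  TopologicalSpace.generateFrom (stoneBasis X)

/-- `n`-bisimilarity on the modal space (via representatives). -/
def nBisimQ {Φ I : Type} {X : Set (PointedModel Φ I)} (n : ℕ) (a b : MSpace X) : Prop :=
  ∃ x y : X, Quot.mk _ x = a ∧ Quot.mk _ y = b ∧ nBisim n x.1 y.1

/-- Basic opens of the `n`-bisimulation (metric) topology: balls `B_{x,n}`. -/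
def bisimBasis {Φ I : Type} (X : Set (PointedModel Φ I)) : Set (Set (MSpace X)) :=
  {S | ∃ (a : MSpace X) (n : ℕ), S = {b : MSpace X | nBisimQ n a b}}

/-- The `n`-bisimulation metric topology on a modal space. -/
def bisimTop {Φ I : Type} (X : Set (PointedModel Φ I)) : TopologicalSpace (MSpace X) :=
  TopologicalSpace.generateFrom (bisimBasis X)

/-- A single-point model with empty accessibility, valuation given by `S`. -/
def pmS (S : Set ℕ) : PointedModel ℕ Unit :=
  ⟨⟨Unit, fun _ _ _ => False, fun p _ => p ∈ S⟩, ()⟩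

/-- Atoms occurring in a formula. -/
def atomsOf : Form ℕ Unit → Finset ℕ
  | .top => ∅
  | .atom p => {p}
  | .neg φ => atomsOf φ
  | .and φ ψ => atomsOf φ ∪ atomsOf ψ
  | .box _ φ => atomsOf φ

lemma pmS_sat_iff (S T : Set ℕ) (φ : Form ℕ Unit)
    (h : ∀ p ∈ atomsOf φ, (p ∈ S ↔ p ∈ T)) : (pmS S).sat φ ↔ (pmS T).sat φ := by
  induction φ with
  | top => simp [PointedModel.sat, KripkeModel.sat]
  | atom p =>
      simpa [PointedModel.sat, KripkeModel.sat, pmS] using h p (by simp [atomsOf])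
  | neg φ ih =>
      have := ih (fun p hp => h p hp)
      simp only [PointedModel.sat, KripkeModel.sat] at *
      exact not_congr this
  | and φ ψ ihφ ihψ =>
      have h1 := ihφ (fun p hp => h p (by simp [atomsOf, hp]))
      have h2 := ihψ (fun p hp => h p (by simp [atomsOf, hp]))
      simp only [PointedModel.sat, KripkeModel.sat] at *
      exact and_congr h1 h2
  | box i φ ih =>
      simp [PointedModel.sat, KripkeModel.sat, pmS]

/-- Over countably infinitely many atoms there is a modal space,
a sequence and a point such that the sequence logically converges to the point
but does not converge to it in the `n`-bisimulation topology. -/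
theorem stmt_3 :
    ∃ X : Set (PointedModel ℕ Unit),
      (∀ x ∈ X, ∀ y ∈ X, modEquiv x y ↔ Bisimilar x y) ∧
      ∃ (seq : ℕ → MSpace X) (x : MSpace X),
        (∀ φ : Form ℕ Unit, satQ φ x → ∃ N : ℕ, ∀ n ≥ N, satQ φ (seq n)) ∧
        ¬ Filter.Tendsto seq Filter.atTop (@nhds _ (bisimTop X) x) := by
  refine ⟨Set.range pmS, ?_, ?_⟩
  · rintro x ⟨S, rfl⟩ y ⟨T, rfl⟩
    constructor
    · intro h
      refine ⟨fun _ _ => True, trivial, ?_, ?_, ?_⟩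
      · intro s t _ p
        have := h (Form.atom p)
        simpa [PointedModel.sat, KripkeModel.sat, pmS] using this
      · rintro s t _ i s' hR; exact absurd hR (by simp [pmS])
      · rintro s t _ i t' hR; exact absurd hR (by simp [pmS])
    · rintro ⟨Z, hZ, hat, _, _⟩ φ
      exact pmS_sat_iff S T φ (fun p _ => hat _ _ hZ p)
  · have hmemU : pmS Set.univ ∈ Set.range pmS := ⟨_, rfl⟩
    have hmemN : ∀ n : ℕ, pmS {p | p ≤ n} ∈ Set.range pmS := fun n => ⟨_, rfl⟩
    refine ⟨fun n => Quot.mk _ ⟨pmS {p | p ≤ n}, hmemN n⟩,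
      Quot.mk _ ⟨pmS Set.univ, hmemU⟩, ?_, ?_⟩
    · intro φ hx
      refine ⟨(atomsOf φ).sup id, fun n hn => ?_⟩
      have : (pmS {p | p ≤ n}).sat φ ↔ (pmS Set.univ).sat φ := by
        refine pmS_sat_iff _ _ φ (fun p hp => ?_)
        have hpN : p ≤ (atomsOf φ).sup id := Finset.le_sup (f := id) hp
        simp [le_trans hpN hn]
      exact this.mpr hx
    · intro h
      letI := bisimTop (Set.range pmS)
      set x : MSpace (Set.range pmS) := Quot.mk _ ⟨pmS Set.univ, hmemU⟩ with hxdef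
      set B : Set (MSpace (Set.range pmS)) := {b | nBisimQ 0 x b} with hBdef
      have hBopen : IsOpen B :=
        TopologicalSpace.GenerateOpen.basic _ ⟨x, 0, rfl⟩
      have hxB : x ∈ B :=
        ⟨⟨pmS Set.univ, hmemU⟩, ⟨pmS Set.univ, hmemU⟩, rfl, rfl, fun p => Iff.rfl⟩
      have hev : ∀ᶠ n in Filter.atTop,
          (fun n => Quot.mk _ (⟨pmS {p | p ≤ n}, hmemN n⟩ : (Set.range pmS : Set _))) n ∈ B :=
        h (hBopen.mem_nhds hxB)
      obtain ⟨n, hn⟩ := hev.exists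
      obtain ⟨x', y', hx', hy', hbis⟩ := hn
      -- x' satisfies atom (n+1), y' does not
      have hx'sat : x'.1.M.V (n+1) x'.1.s := by
        have : satQ (Form.atom (n+1)) (Quot.mk _ x') = satQ (Form.atom (n+1)) x := by
          rw [hx']
        have hxsat : satQ (Form.atom (n+1)) x := by
          simp [hxdef, satQ, PointedModel.sat, KripkeModel.sat, pmS]
        have : satQ (Form.atom (n+1)) (Quot.mk _ x') := this ▸ hxsat
        exact this
      have hy'sat : ¬ y'.1.M.V (n+1) y'.1.s := by
        have : satQ (Form.atom (n+1)) (Quot.mk _ y')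
            = satQ (Form.atom (n+1)) (Quot.mk (fun a b : (Set.range pmS : Set _) =>
              modEquiv a.1 b.1) ⟨pmS {p | p ≤ n}, hmemN n⟩) := by
          rw [hy']
        intro hcon
        have : satQ (Form.atom (n+1)) (Quot.mk (fun a b : (Set.range pmS : Set _) =>
            modEquiv a.1 b.1) ⟨pmS {p | p ≤ n}, hmemN n⟩) := this ▸ hcon
        simp [satQ, PointedModel.sat, KripkeModel.sat, pmS] at this
      exact hy'sat ((hbis (n+1)).mp hx'sat)
end

section
/- If the logic Λ is logically compact (every finitely Λ-consistent set of formulas is Λ-consistent) and the modal space X is saturated (every Λ-consistent set of formulas is satisfied at some point of X), then X with the Stone topology is a compact topological space. -/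
/-- If the logic is logically compact and the modal space is saturated,
then the modal space with the Stone topology is compact.
`Con A` expresses that the set of formulas `A` is `Λ`-consistent. -/
theorem stmt_6 {Φ I : Type} (X : Set (PointedModel Φ I))
    (Con : Set (Form Φ I) → Prop)
    (hlogcompact : ∀ A : Set (Form Φ I), (∀ F ⊆ A, F.Finite → Con F) → Con A)
    (hsaturated : ∀ A : Set (Form Φ I), Con A → ∃ a : MSpace X, ∀ φ ∈ A, satQ φ a)
    (hsound : ∀ A : Set (Form Φ I), (∃ a : MSpace X, ∀ φ ∈ A, satQ φ a) → Con A) :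
    @CompactSpace (MSpace X) (stoneTop X) := by
  letI : TopologicalSpace (MSpace X) := stoneTop X
  -- helper: satisfaction of neg/and/top on the quotient
  have satQ_neg : ∀ (ψ : Form Φ I) (a : MSpace X),
      satQ (Form.neg ψ) a ↔ ¬ satQ ψ a := fun ψ a =>
    Quot.inductionOn a (fun _ => Iff.rfl)
  have satQ_and : ∀ (ψ χ : Form Φ I) (a : MSpace X),
      satQ (Form.and ψ χ) a ↔ satQ ψ a ∧ satQ χ a := fun ψ χ a =>
    Quot.inductionOn a (fun _ => Iff.rfl)
  have satQ_top : ∀ (a : MSpace X), satQ (Form.top (Φ := Φ) (I := I)) a := fun a =>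
    Quot.inductionOn a (fun _ => trivial)
  -- every open set is a union of basic sets
  have hbasic : ∀ G : Set (MSpace X), IsOpen G → ∀ a ∈ G,
      ∃ φ : Form Φ I, satQ φ a ∧ ∀ b, satQ φ b → b ∈ G := by
    intro G hG
    induction hG with
    | basic S hS =>
      obtain ⟨φ, rfl⟩ := hS
      intro a ha
      exact ⟨φ, ha, fun b hb => hb⟩
    | univ =>
      intro a _
      exact ⟨Form.top, satQ_top a, fun b _ => trivial⟩
    | inter G1 G2 _ _ ih1 ih2 =>
      intro a ha
      obtain ⟨φ, hφa, hφ⟩ := ih1 a ha.1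
      obtain ⟨ψ, hψa, hψ⟩ := ih2 a ha.2
      refine ⟨Form.and φ ψ, (satQ_and φ ψ a).2 ⟨hφa, hψa⟩, fun b hb => ?_⟩
      rcases (satQ_and φ ψ b).1 hb with ⟨h1, h2⟩
      exact ⟨hφ b h1, hψ b h2⟩
    | sUnion S _ ih =>
      intro a ha
      obtain ⟨G, hGS, haG⟩ := ha
      obtain ⟨φ, hφa, hφ⟩ := ih G hGS a haG
      exact ⟨φ, hφa, fun b hb => ⟨G, hGS, hφ b hb⟩⟩
  constructor
  apply isCompact_of_finite_subfamily_closed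
  intro ι Z hZc hZe
  by_contra hcon
  push_neg at hcon
  -- the set of formulas ¬ψ where U_ψ is disjoint from some Z i
  set A : Set (Form Φ I) :=
    {χ | ∃ (ψ : Form Φ I) (i : ι), χ = Form.neg ψ ∧ ∀ b, satQ ψ b → b ∉ Z i} with hA
  have hConA : Con A := by
    apply hlogcompact
    intro F hFA hFfin
    apply hsound
    have hchoice : ∀ x : F, ∃ (ψ : Form Φ I) (i : ι),
        x.1 = Form.neg ψ ∧ ∀ b, satQ ψ b → b ∉ Z i := fun x => hFA x.2
    choose ψf idx heq hdisj using hchoice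
    haveI : Fintype F := hFfin.fintype
    classical
    have hne := hcon (Finset.univ.image idx)
    rw [Set.univ_inter] at hne
    obtain ⟨a, ha⟩ := hne
    refine ⟨a, fun χ hχ => ?_⟩
    have haZ : a ∈ Z (idx ⟨χ, hχ⟩) :=
      Set.mem_iInter₂.1 ha (idx ⟨χ, hχ⟩) (Finset.mem_image.2 ⟨(⟨χ, hχ⟩ : F), Finset.mem_univ _, rfl⟩)
    have : ¬ satQ (ψf ⟨χ, hχ⟩) a := fun h => hdisj ⟨χ, hχ⟩ a h haZ
    rw [show χ = Form.neg (ψf ⟨χ, hχ⟩) from heq ⟨χ, hχ⟩]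
    exact (satQ_neg _ a).2 this
  obtain ⟨a, haA⟩ := hsaturated A hConA
  -- a belongs to every Z i
  have haZ : ∀ i, a ∈ Z i := by
    intro i
    by_contra haZi
    have hopen : IsOpen (Z i)ᶜ := (hZc i).isOpen_compl
    obtain ⟨ψ, hψa, hψ⟩ := hbasic (Z i)ᶜ hopen a haZi
    have hmem : Form.neg ψ ∈ A := ⟨ψ, i, rfl, fun b hb => hψ b hb⟩
    exact (satQ_neg ψ a).1 (haA _ hmem) hψa
  have : a ∈ Set.univ ∩ ⋂ i, Z i := ⟨trivial, Set.mem_iInter.2 haZ⟩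
  rw [hZe] at this
  exact this
end

section
/- If the language L is based on a finite set of atoms (and finitely many modalities), then on a modal space X where modal equivalence coincides with bisimilarity, there is a weighted-sum metric d_w ∈ D_X that is topologically equivalent to the n-bisimulation metric; consequently the n-bisimulation topology equals the Stone topology. -/
/-- The metric topology of a distance function, generated by its open balls. -/
def ballTop {α : Type 1} (d : α → α → ℝ) : TopologicalSpace α :=
  TopologicalSpace.generateFrom
    {S | ∃ (a : α) (ε : ℝ), 0 < ε ∧ S = {b : α | d a b < ε}}

open scoped Classical

namespace Form

variable {Φ I : Type}

def depth : Form Φ I → ℕ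
  | top => 0
  | atom _ => 0
  | neg φ => φ.depth
  | and φ ψ => max φ.depth ψ.depth
  | box _ φ => φ.depth + 1

def dia (i : I) (φ : Form Φ I) : Form Φ I := neg (box i (neg φ))

def conj : List (Form Φ I) → Form Φ I
  | [] => top
  | φ :: l => and φ (conj l)

noncomputable def bigAnd (s : Finset (Form Φ I)) : Form Φ I := conj s.toList

noncomputable def bigOr (s : Finset (Form Φ I)) : Form Φ I := neg (bigAnd (s.image neg))

def encode [Encodable Φ] [Encodable I] : Form Φ I → ℕ
  | top => Nat.pair 0 0
  | atom p => Nat.pair 1 (Encodable.encode p)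
  | neg φ => Nat.pair 2 φ.encode
  | and φ ψ => Nat.pair 3 (Nat.pair φ.encode ψ.encode)
  | box i φ => Nat.pair 4 (Nat.pair (Encodable.encode i) φ.encode)

theorem encode_injective [Encodable Φ] [Encodable I] :
    Function.Injective (encode : Form Φ I → ℕ) := by
  intro φ ψ h
  induction φ generalizing ψ <;> cases ψ <;> simp [encode, Nat.pair_eq_pair] at h ⊢ <;> grind

instance [Encodable Φ] [Encodable I] : Countable (Form Φ I) :=
  encode_injective.countable

instance : Nonempty (Form Φ I) := ⟨top⟩

end Form

namespace PointedModel

open Form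

variable {Φ I : Type} (x : PointedModel Φ I)

theorem sat_neg (φ : Form Φ I) : x.sat (neg φ) ↔ ¬ x.sat φ := Iff.rfl

theorem sat_and (φ ψ : Form Φ I) : x.sat (and φ ψ) ↔ x.sat φ ∧ x.sat ψ := Iff.rfl

theorem sat_box (i : I) (φ : Form Φ I) :
    x.sat (box i φ) ↔ ∀ t, x.M.R i x.s t → sat ⟨x.M, t⟩ φ := Iff.rfl

theorem sat_dia (i : I) (φ : Form Φ I) :
    x.sat (dia i φ) ↔ ∃ t, x.M.R i x.s t ∧ sat ⟨x.M, t⟩ φ := by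
  simp [dia, sat_neg, sat_box]

theorem sat_conj (l : List (Form Φ I)) : x.sat (conj l) ↔ ∀ φ ∈ l, x.sat φ := by
  induction l with
  | nil => exact iff_of_true trivial fun _ h => nomatch h
  | cons φ l ih => simp [conj, sat_and, ih]

theorem sat_bigAnd (s : Finset (Form Φ I)) : x.sat (bigAnd s) ↔ ∀ φ ∈ s, x.sat φ := by
  simp [bigAnd, sat_conj]

theorem sat_bigOr (s : Finset (Form Φ I)) : x.sat (bigOr s) ↔ ∃ φ ∈ s, x.sat φ := by
  simp [bigOr, sat_neg, sat_bigAnd]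

end PointedModel

section Bisimulation

open Form

variable {Φ I : Type}

theorem nBisim_refl : ∀ (n : ℕ) (x : PointedModel Φ I), nBisim n x x
  | 0, _ => fun _ => Iff.rfl
  | n + 1, _ => ⟨fun _ => Iff.rfl, fun _ t ht => ⟨t, ht, nBisim_refl n _⟩,
      fun _ u hu => ⟨u, hu, nBisim_refl n _⟩⟩

theorem nBisim_trans : ∀ (n : ℕ) {x y z : PointedModel Φ I},
    nBisim n x y → nBisim n y z → nBisim n x z
  | 0, _, _, _, hxy, hyz => fun p => (hxy p).trans (hyz p)
  | n + 1, _, _, _, hxy, hyz => ⟨fun p => (hxy.1 p).trans (hyz.1 p),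
      fun i t ht =>
        let ⟨u, hu, htu⟩ := hxy.2.1 i t ht
        let ⟨v, hv, huv⟩ := hyz.2.1 i u hu
        ⟨v, hv, nBisim_trans n htu huv⟩,
      fun i v hv =>
        let ⟨u, hu, huv⟩ := hyz.2.2 i v hv
        let ⟨t, ht, htu⟩ := hxy.2.2 i u hu
        ⟨t, ht, nBisim_trans n htu huv⟩⟩

theorem nBisim_of_succ : ∀ (n : ℕ) {x y : PointedModel Φ I},
    nBisim (n + 1) x y → nBisim n x y
  | 0, _, _, h => h.1
  | n + 1, _, _, h => ⟨h.1,
      fun i t ht => let ⟨u, hu, htu⟩ := h.2.1 i t ht; ⟨u, hu, nBisim_of_succ n htu⟩,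
      fun i u hu => let ⟨t, ht, htu⟩ := h.2.2 i u hu; ⟨t, ht, nBisim_of_succ n htu⟩⟩

theorem nBisim_mono {k n : ℕ} (hkn : k ≤ n) {x y : PointedModel Φ I} (h : nBisim n x y) :
    nBisim k x y := by
  induction hkn with
  | refl => exact h
  | step _ ih => exact ih (nBisim_of_succ _ h)

theorem nBisim.val_iff {n : ℕ} {x y : PointedModel Φ I} (h : nBisim n x y) (p : Φ) :
    x.M.V p x.s ↔ y.M.V p y.s := by
  cases n with
  | zero => exact h p
  | succ n => exact h.1 p

theorem sat_iff_of_nBisim (φ : Form Φ I) :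
    ∀ {n : ℕ}, φ.depth ≤ n → ∀ {x y : PointedModel Φ I}, nBisim n x y → (x.sat φ ↔ y.sat φ) := by
  induction φ with
  | top => exact fun _ _ _ _ => Iff.rfl
  | atom p => exact fun _ _ _ h => h.val_iff p
  | neg φ ih => exact fun hφ _ _ h => not_congr (ih hφ h)
  | and φ ψ ihφ ihψ =>
    exact fun hφψ _ _ h =>
      and_congr (ihφ (le_of_max_le_left hφψ) h) (ihψ (le_of_max_le_right hφψ) h)
  | box i φ ih =>
    rintro (_ | n) hφ x y h
    · exact absurd hφ (by simp [depth])
    have hφn : φ.depth ≤ n := Nat.le_of_succ_le_succ hφ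
    simp only [PointedModel.sat_box]
    constructor
    · intro hx u hu
      obtain ⟨t, ht, htu⟩ := h.2.2 i u hu
      exact (ih hφn htu).mp (hx t ht)
    · intro hy t ht
      obtain ⟨u, hu, htu⟩ := h.2.1 i t ht
      exact (ih hφn htu).mpr (hy u hu)

end Bisimulation

section CharacteristicFormula

open Form Finset

variable {Φ I : Type} [Fintype Φ]

noncomputable def atomChar (v : Φ → Prop) : Form Φ I :=
  bigAnd (univ.image fun p => if v p then atom p else neg (atom p))

theorem sat_atomChar (v : Φ → Prop) (x : PointedModel Φ I) :
    x.sat (atomChar v) ↔ ∀ p, v p ↔ x.M.V p x.s := by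
  simp only [atomChar, PointedModel.sat_bigAnd, forall_mem_image, mem_univ, true_implies]
  refine forall_congr' fun p => ?_
  by_cases hp : v p <;> simp [hp, PointedModel.sat, KripkeModel.sat]

variable [Fintype I]

noncomputable def stepChar (v : Φ → Prop) (S : I → Finset (Form Φ I)) : Form Φ I :=
  and (atomChar v)
    (bigAnd (univ.image fun i => and (bigAnd ((S i).image (dia i))) (box i (bigOr (S i)))))

theorem sat_stepChar (v : Φ → Prop) (S : I → Finset (Form Φ I)) (x : PointedModel Φ I) :
    x.sat (stepChar v S) ↔ (∀ p, v p ↔ x.M.V p x.s) ∧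
      ∀ i, (∀ φ ∈ S i, ∃ t, x.M.R i x.s t ∧ PointedModel.sat ⟨x.M, t⟩ φ) ∧
        ∀ t, x.M.R i x.s t → ∃ φ ∈ S i, PointedModel.sat ⟨x.M, t⟩ φ := by
  simp [stepChar, PointedModel.sat_and, sat_atomChar, PointedModel.sat_bigAnd,
    PointedModel.sat_dia, PointedModel.sat_box, PointedModel.sat_bigOr]

noncomputable def charSet : ℕ → Finset (Form Φ I)
  | 0 => univ.image atomChar
  | n + 1 => (univ ×ˢ Fintype.piFinset fun _ => (charSet n).powerset).image
      fun vS => stepChar vS.1 vS.2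

/-- The characteristic formulas of the `i`-successors of `x` are collected inside the finite set
`charSet n`, which keeps the conjunctions finite. -/
noncomputable def charForm : ℕ → PointedModel Φ I → Form Φ I
  | 0, x => atomChar fun p => x.M.V p x.s
  | n + 1, x => stepChar (fun p => x.M.V p x.s) fun i =>
      (charSet n).filter fun φ => ∃ t, x.M.R i x.s t ∧ charForm n ⟨x.M, t⟩ = φ

theorem charForm_mem_charSet : ∀ (n : ℕ) (x : PointedModel Φ I), charForm n x ∈ charSet n
  | 0, _ => mem_image_of_mem _ (mem_univ _)
  | _ + 1, _ => mem_image.mpr ⟨⟨_, _⟩, mem_product.mpr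
      ⟨mem_univ _, Fintype.mem_piFinset.mpr fun _ => mem_powerset.mpr (filter_subset _ _)⟩, rfl⟩

theorem sat_charForm : ∀ (n : ℕ) (x y : PointedModel Φ I), y.sat (charForm n x) ↔ nBisim n x y
  | 0, x, y => sat_atomChar _ y
  | n + 1, x, y => by
    have hmem : ∀ i φ, φ ∈ (charSet n).filter (fun φ => ∃ t, x.M.R i x.s t ∧
        charForm n ⟨x.M, t⟩ = φ) ↔ ∃ t, x.M.R i x.s t ∧ charForm n ⟨x.M, t⟩ = φ := by
      intro i φ
      simp only [mem_filter, and_iff_right_iff_imp]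
      rintro ⟨t, -, rfl⟩
      exact charForm_mem_charSet n _
    simp only [charForm, sat_stepChar, hmem, forall_exists_index, and_imp,
      forall_apply_eq_imp_iff₂, exists_exists_and_eq_and, sat_charForm n, nBisim, forall_and]

end CharacteristicFormula

open TopologicalSpace in
theorem ballTop_eq_generateFrom {α : Type 1} {d : α → α → ℝ} {B : Set (Set α)}
    (hself : ∀ a, d a a = 0) (htri : ∀ a b c, d a c ≤ d a b + d b c)
    (hball : ∀ a ε, 0 < ε → ∃ V ∈ B, a ∈ V ∧ V ⊆ {b | d a b < ε})
    (hB : ∀ V ∈ B, ∀ a ∈ V, ∃ ε > 0, {b | d a b < ε} ⊆ V) :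
    ballTop d = generateFrom B := by
  apply le_antisymm
  · refine le_generateFrom fun V hV => (@isOpen_iff_forall_mem_open _ (ballTop d) _).mpr
      fun a ha => ?_
    obtain ⟨ε, hε, hsub⟩ := hB V hV a ha
    exact ⟨_, hsub, isOpen_generateFrom_of_mem ⟨a, ε, hε, rfl⟩, by simpa [hself] using hε⟩
  · refine le_generateFrom ?_
    rintro _ ⟨a, ε, hε, rfl⟩
    refine (@isOpen_iff_forall_mem_open _ (generateFrom B) _).mpr fun c hc => ?_
    obtain ⟨V, hVB, hcV, hV⟩ := hball c (ε - d a c) (sub_pos.mpr hc)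
    refine ⟨V, fun b hb => ?_, isOpen_generateFrom_of_mem hVB, hcV⟩
    have hcb : d c b < ε - d a c := hV hb
    show d a b < ε
    linarith [htri a c b]

section WeightedDist

open Form

variable {Φ I : Type} {X : Set (PointedModel Φ I)}

theorem satQ_mk (φ : Form Φ I) (x : X) : satQ φ (Quot.mk _ x) ↔ x.1.sat φ := Iff.rfl

theorem satQ_bigAnd (s : Finset (Form Φ I)) (a : MSpace X) :
    satQ (bigAnd s) a ↔ ∀ φ ∈ s, satQ φ a := by
  induction a using Quot.ind
  exact PointedModel.sat_bigAnd _ s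

noncomputable def weightedDist (e : ℕ → Form Φ I) (w : ℕ → ℝ) (a b : MSpace X) : ℝ :=
  ∑' k, if (satQ (e k) a ↔ satQ (e k) b) then 0 else w k

variable {w : ℕ → ℝ}

theorem weightedDist_summable (e : ℕ → Form Φ I) (hw : ∀ k, 0 ≤ w k) (hsum : Summable w)
    (a b : MSpace X) :
    Summable fun k => if (satQ (e k) a ↔ satQ (e k) b) then 0 else w k :=
  hsum.of_nonneg_of_le (fun k => by split_ifs <;> simp [hw k])
    (fun k => by split_ifs <;> simp [hw k])

variable {e : ℕ → Form Φ I}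

theorem weightedDist_self (a : MSpace X) : weightedDist e w a a = 0 := by
  simp [weightedDist]

theorem weightedDist_triangle (hw : ∀ k, 0 ≤ w k) (hsum : Summable w) (a b c : MSpace X) :
    weightedDist e w a c ≤ weightedDist e w a b + weightedDist e w b c := by
  rw [weightedDist, weightedDist, weightedDist, ← (weightedDist_summable e hw hsum a b).tsum_add
    (weightedDist_summable e hw hsum b c)]
  refine (weightedDist_summable e hw hsum a c).tsum_le_tsum (fun k => ?_)
    ((weightedDist_summable e hw hsum a b).add (weightedDist_summable e hw hsum b c))
  have := hw k
  split_ifs <;> first | linarith | tauto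

theorem weight_le_weightedDist (hw : ∀ k, 0 ≤ w k) (hsum : Summable w) {a b : MSpace X} {k : ℕ}
    (hk : ¬ (satQ (e k) a ↔ satQ (e k) b)) : w k ≤ weightedDist e w a b := by
  have := (weightedDist_summable e hw hsum a b).le_tsum k fun i _ => by
    split_ifs <;> simp [hw i]
  rwa [if_neg hk] at this

theorem weightedDist_le_tail (hw : ∀ k, 0 ≤ w k) (hsum : Summable w) {a b : MSpace X} {K : ℕ}
    (hK : ∀ k < K, (satQ (e k) a ↔ satQ (e k) b)) :
    weightedDist e w a b ≤ ∑' k, w (k + K) := by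
  have hs := weightedDist_summable e hw hsum a b
  rw [weightedDist, ← hs.sum_add_tsum_nat_add K,
    Finset.sum_eq_zero fun k hk => if_pos (hK k (Finset.mem_range.mp hk)), zero_add]
  refine ((summable_nat_add_iff K).mpr hs).tsum_le_tsum (fun k => ?_)
    ((summable_nat_add_iff K).mpr hsum)
  split_ifs <;> simp [hw _]

theorem ballTop_weightedDist_eq_stoneTop (he : Function.Surjective e) (hw : ∀ k, 0 < w k)
    (hsum : Summable w) : ballTop (weightedDist e w : MSpace X → MSpace X → ℝ) = stoneTop X := by
  have hw₀ : ∀ k, 0 ≤ w k := fun k => (hw k).le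
  refine ballTop_eq_generateFrom weightedDist_self (weightedDist_triangle hw₀ hsum) ?_ ?_
  · intro a ε hε
    obtain ⟨K, hK⟩ := ((tendsto_sum_nat_add w).eventually (gt_mem_nhds hε)).exists
    let lit : ℕ → Form Φ I := fun k => if satQ (e k) a then e k else neg (e k)
    have hlit : ∀ k (b : MSpace X), satQ (lit k) b ↔ (satQ (e k) a ↔ satQ (e k) b) := by
      intro k b
      induction b using Quot.ind
      by_cases hk : satQ (e k) a <;> simp [lit, hk, satQ_mk, PointedModel.sat_neg]
    refine ⟨_, ⟨bigAnd ((Finset.range K).image lit), rfl⟩, ?_, fun b hb => ?_⟩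
    · simp [satQ_bigAnd, hlit]
    · have hagree : ∀ k < K, (satQ (e k) a ↔ satQ (e k) b) := by
        simpa [satQ_bigAnd, hlit] using hb
      exact (weightedDist_le_tail hw₀ hsum hagree).trans_lt hK
  · rintro _ ⟨φ, rfl⟩ a ha
    obtain ⟨k, rfl⟩ := he φ
    refine ⟨w k, hw k, fun b hb => ?_⟩
    by_contra hbk
    exact (weight_le_weightedDist hw₀ hsum fun h => hbk (h.mp ha)).not_gt hb

end WeightedDist

section BisimDist

variable {Φ I : Type} {X : Set (PointedModel Φ I)}

/-- `d` is the `n`-bisimulation metric `d_B`. -/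
structure IsNBisimDist (d : MSpace X → MSpace X → ℝ) : Prop where
  eq_zero : ∀ x y : X, (∀ n, nBisim n x.1 y.1) → d (Quot.mk _ x) (Quot.mk _ y) = 0
  eq_pow : ∀ (x y : X) (n : ℕ), ¬ nBisim n x.1 y.1 → (∀ k < n, nBisim k x.1 y.1) →
    d (Quot.mk _ x) (Quot.mk _ y) = (1 / 2) ^ n

namespace IsNBisimDist

variable {d : MSpace X → MSpace X → ℝ} (hd : IsNBisimDist d)
include hd

theorem eq_zero_or_eq_pow (x y : X) :
    (d (Quot.mk _ x) (Quot.mk _ y) = 0 ∧ ∀ n, nBisim n x.1 y.1) ∨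
      ∃ N, d (Quot.mk _ x) (Quot.mk _ y) = (1 / 2) ^ N ∧ ∀ n, nBisim n x.1 y.1 ↔ n < N := by
  by_cases hall : ∀ n, nBisim n x.1 y.1
  · exact .inl ⟨hd.eq_zero x y hall, hall⟩
  · push Not at hall
    refine .inr ⟨Nat.find hall, hd.eq_pow x y _ (Nat.find_spec hall)
      fun k hk => not_not.mp (Nat.find_min hall hk), fun n => ?_⟩
    rw [Nat.lt_find_iff]
    exact ⟨fun h m hm => not_not.mpr (nBisim_mono hm h), fun h => not_not.mp (h n le_rfl)⟩

theorem nonneg (a b : MSpace X) : 0 ≤ d a b := by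
  induction a using Quot.ind with | _ x =>
  induction b using Quot.ind with | _ y =>
  rcases hd.eq_zero_or_eq_pow x y with ⟨h, -⟩ | ⟨N, h, -⟩
  · exact h.ge
  · rw [h]; positivity

theorem lt_pow_iff (x y : X) (n : ℕ) :
    d (Quot.mk _ x) (Quot.mk _ y) < (1 / 2) ^ n ↔ nBisim n x.1 y.1 := by
  rcases hd.eq_zero_or_eq_pow x y with ⟨h, hall⟩ | ⟨N, h, hN⟩ <;> rw [h]
  · exact iff_of_true (by positivity) (hall n)
  · rw [pow_lt_pow_iff_right_of_lt_one₀ (by norm_num) (by norm_num), hN]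

theorem self_eq_zero (a : MSpace X) : d a a = 0 := by
  induction a using Quot.ind with | _ x =>
  exact hd.eq_zero x x fun n => nBisim_refl n _

/-- Even the ultrametric inequality holds, since `n`-bisimilarity is transitive. -/
theorem triangle (a b c : MSpace X) : d a c ≤ d a b + d b c := by
  induction a using Quot.ind with | _ x =>
  induction b using Quot.ind with | _ y =>
  induction c using Quot.ind with | _ z =>
  have hxy := hd.nonneg (Quot.mk _ x) (Quot.mk _ y)
  have hyz := hd.nonneg (Quot.mk _ y) (Quot.mk _ z)
  rcases hd.eq_zero_or_eq_pow x z with ⟨h, -⟩ | ⟨N, h, hN⟩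
  · rw [h]; positivity
  · rw [h]
    by_contra! hlt
    have hxz := nBisim_trans N ((hd.lt_pow_iff x y N).mp (by linarith))
      ((hd.lt_pow_iff y z N).mp (by linarith))
    exact lt_irrefl N ((hN N).mp hxz)

theorem ballTop_eq_stoneTop [Fintype Φ] [Fintype I] : ballTop d = stoneTop X := by
  refine ballTop_eq_generateFrom hd.self_eq_zero hd.triangle ?_ ?_
  · intro a ε hε
    induction a using Quot.ind with | _ x =>
    obtain ⟨n, hn⟩ := exists_pow_lt_of_lt_one hε (by norm_num : (1 / 2 : ℝ) < 1)
    refine ⟨_, ⟨charForm n x.1, rfl⟩, (sat_charForm n x.1 x.1).mpr (nBisim_refl n _),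
      fun b hb => ?_⟩
    induction b using Quot.ind with | _ y =>
    exact ((hd.lt_pow_iff x y n).mpr ((sat_charForm n x.1 y.1).mp hb)).trans hn
  · rintro _ ⟨φ, rfl⟩ a ha
    induction a using Quot.ind with | _ x =>
    refine ⟨(1 / 2) ^ φ.depth, by positivity, fun b hb => ?_⟩
    induction b using Quot.ind with | _ y =>
    exact (sat_iff_of_nBisim φ le_rfl ((hd.lt_pow_iff x y _).mp hb)).mp ha

end IsNBisimDist

end BisimDist

theorem stmt_9_general (m j : ℕ) (X : Set (PointedModel (Fin m) (Fin j)))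
    (dB : MSpace X → MSpace X → ℝ)
    (hzero : ∀ x y : X, (∀ n : ℕ, nBisim n x.1 y.1) →
      dB (Quot.mk _ x) (Quot.mk _ y) = 0)
    (hleast : ∀ (x y : X) (n : ℕ), ¬ nBisim n x.1 y.1 → (∀ k < n, nBisim k x.1 y.1) →
      dB (Quot.mk _ x) (Quot.mk _ y) = (1 / 2) ^ n) :
    ∃ (e : ℕ → Form (Fin m) (Fin j)) (w : ℕ → ℝ) (d : MSpace X → MSpace X → ℝ),
      (∀ k, 0 < w k) ∧ Summable w ∧
      (∀ ψ : Form (Fin m) (Fin j), ∃ S ⊆ Set.range e,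
        (∀ a : MSpace X, (∀ φ ∈ S, satQ φ a) → satQ ψ a) ∨
        (∀ a : MSpace X, (∀ φ ∈ S, satQ φ a) → satQ (Form.neg ψ) a)) ∧
      (∀ a b : MSpace X,
        d a b = ∑' k : ℕ, if (satQ (e k) a ↔ satQ (e k) b) then (0 : ℝ) else w k) ∧
      ballTop d = ballTop dB ∧
      ballTop dB = stoneTop X := by
  obtain ⟨e, he⟩ := exists_surjective_nat (Form (Fin m) (Fin j))
  have hw : ∀ k, (0 : ℝ) < (1 / 2) ^ (k + 1) := fun k => by positivity
  have hsum : Summable fun k : ℕ => (1 / 2 : ℝ) ^ (k + 1) :=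
    (summable_nat_add_iff 1).mpr summable_geometric_two
  have hdB : IsNBisimDist dB := ⟨hzero, hleast⟩
  refine ⟨e, _, weightedDist e _, hw, hsum, fun ψ => ?_, fun _ _ => rfl, ?_,
    hdB.ballTop_eq_stoneTop⟩
  · obtain ⟨k, rfl⟩ := he ψ
    exact ⟨{e k}, by simp, .inl fun a ha => ha _ rfl⟩
  · rw [ballTop_weightedDist_eq_stoneTop he hw hsum, hdB.ballTop_eq_stoneTop]

/-- Over a language with finitely many atoms and finitely many modalities,
on a modal space where modal equivalence coincides with bisimilarity, there is a
weighted-sum metric `d` (from the family `D_X`) topologically equivalent to the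
`n`-bisimulation metric `dB`; consequently the `n`-bisimulation topology is the
Stone topology. -/
theorem stmt_9 (m j : ℕ) (X : Set (PointedModel (Fin m) (Fin j)))
    (hcoincide : ∀ x ∈ X, ∀ y ∈ X, modEquiv x y ↔ Bisimilar x y)
    (dB : MSpace X → MSpace X → ℝ)
    (hzero : ∀ x y : X, (∀ n : ℕ, nBisim n x.1 y.1) →
      dB (Quot.mk _ x) (Quot.mk _ y) = 0)
    (hleast : ∀ (x y : X) (n : ℕ), ¬ nBisim n x.1 y.1 → (∀ k < n, nBisim k x.1 y.1) →
      dB (Quot.mk _ x) (Quot.mk _ y) = (1 / 2) ^ n) :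
    ∃ (e : ℕ → Form (Fin m) (Fin j)) (w : ℕ → ℝ) (d : MSpace X → MSpace X → ℝ),
      (∀ k, 0 < w k) ∧ Summable w ∧
      (∀ ψ : Form (Fin m) (Fin j), ∃ S ⊆ Set.range e,
        (∀ a : MSpace X, (∀ φ ∈ S, satQ φ a) → satQ ψ a) ∨
        (∀ a : MSpace X, (∀ φ ∈ S, satQ φ a) → satQ (Form.neg ψ) a)) ∧
      (∀ a b : MSpace X,
        d a b = ∑' k : ℕ, if (satQ (e k) a ↔ satQ (e k) b) then (0 : ℝ) else w k) ∧
      ballTop d = ballTop dB ∧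
      ballTop dB = stoneTop X :=
  stmt_9_general m j X dB hzero hleast
end

section
/- Product update with a multi-pointed action model preserves modal equivalence: if pointed Kripke models x and x' are modally equivalent (equivalently, bisimilar, under the image-finite assumption), and Σ_Γ is a multi-pointed action model deterministic and exhaustive over a set containing x and x', then x ⊗ Σ_Γ and x' ⊗ Σ_Γ are modally equivalent. Hence a clean map f on the modal space, defined by f([x]) = [x ⊗ Σ_Γ], is well-defined. -/
/-- A multi-pointed action model with postconditions: actions, accessibility,
preconditions, postconditions (a partial assignment of truth values to atoms,
representing `⊤` or a conjunctive clause of literals), and a nonempty set of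
designated actions. -/
structure ActionModel (Φ I : Type) where
  A : Type
  R : I → A → A → Prop
  pre : A → Form Φ I
  post : A → Φ → Option Bool
  Γ : Set A
  Γ_nonempty : Γ.Nonempty

/-- Product update `x ⊗ Σ` of a pointed model with an action model, with actual
action `σ` (which must be executable at the point of `x`). -/
def productUpdate {Φ I : Type} (x : PointedModel Φ I) (E : ActionModel Φ I)
    (σ : E.A) (hσ : x.M.sat x.s (E.pre σ)) : PointedModel Φ I where
  M := { W := {p : x.M.W × E.A // x.M.sat p.1 (E.pre p.2)}
         R := fun i p q => x.M.R i p.1.1 q.1.1 ∧ E.R i p.1.2 q.1.2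
         V := fun pr p =>
           match E.post p.1.2 pr with
           | some b => b = true
           | none => x.M.V pr p.1.1 }
  s := ⟨(x.s, σ), hσ⟩

/-- `E` is deterministic over `X`: preconditions of distinct designated actions are
jointly unsatisfiable over `X`. -/
def Deterministic {Φ I : Type} (X : Set (PointedModel Φ I)) (E : ActionModel Φ I) : Prop :=
  ∀ y ∈ X, ∀ σ ∈ E.Γ, ∀ σ' ∈ E.Γ, σ ≠ σ' →
    ¬ (y.sat (E.pre σ) ∧ y.sat (E.pre σ'))

/-- `E` is exhaustive over `X`: every model in `X` satisfies some designated precondition. -/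
def Exhaustive {Φ I : Type} (X : Set (PointedModel Φ I)) (E : ActionModel Φ I) : Prop :=
  ∀ y ∈ X, ∃ σ ∈ E.Γ, y.sat (E.pre σ)

lemma bisim_sat {Φ I : Type} {M M' : KripkeModel Φ I} (Z : M.W → M'.W → Prop)
    (hV : ∀ s t, Z s t → ∀ p, M.V p s ↔ M'.V p t)
    (hF : ∀ s t, Z s t → ∀ i s', M.R i s s' → ∃ t', M'.R i t t' ∧ Z s' t')
    (hB : ∀ s t, Z s t → ∀ i t', M'.R i t t' → ∃ s', M.R i s s' ∧ Z s' t') :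
    ∀ (φ : Form Φ I) (s : M.W) (t : M'.W), Z s t → (M.sat s φ ↔ M'.sat t φ) := by
  intro φ
  induction φ with
  | top => intro s t _; simp [KripkeModel.sat]
  | atom p => intro s t h; exact hV s t h p
  | neg φ ih => intro s t h; simp only [KripkeModel.sat]; rw [ih s t h]
  | and φ ψ ih1 ih2 => intro s t h; simp only [KripkeModel.sat]; rw [ih1 s t h, ih2 s t h]
  | box i φ ih =>
    intro s t h
    constructor
    · intro hs v hv
      obtain ⟨s', hs', hZ⟩ := hB s t h i v hv
      exact (ih s' v hZ).1 (hs s' hs')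
    · intro ht v hv
      obtain ⟨t', ht', hZ⟩ := hF s t h i v hv
      exact (ih v t' hZ).2 (ht t' ht')

/-- Product update with a multi-pointed action model that is
deterministic and exhaustive over a set containing `x` and `x'` preserves modal
equivalence of modally equivalent (equivalently, under the image-finiteness
assumption, bisimilar) pointed models; hence the induced clean map
`[x] ↦ [x ⊗ Σ_Γ]` on the modal space is well-defined. -/
theorem stmt_11 {Φ I : Type} (X : Set (PointedModel Φ I)) (E : ActionModel Φ I)
    (hdet : Deterministic X E) (hex : Exhaustive X E)
    (x x' : PointedModel Φ I) (hx : x ∈ X) (hx' : x' ∈ X)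
    (hme : modEquiv x x') (hbis : Bisimilar x x')
    (σ σ' : E.A) (hσΓ : σ ∈ E.Γ) (hσ'Γ : σ' ∈ E.Γ)
    (hpre : x.M.sat x.s (E.pre σ)) (hpre' : x'.M.sat x'.s (E.pre σ')) :
    modEquiv (productUpdate x E σ hpre) (productUpdate x' E σ' hpre') ∧
    Quot.mk modEquiv (productUpdate x E σ hpre) =
      Quot.mk modEquiv (productUpdate x' E σ' hpre') := by
  -- First, σ = σ' by determinism.
  have hσσ' : σ = σ' := by
    by_contra hne
    exact hdet x hx σ hσΓ σ' hσ'Γ hne ⟨hpre, (hme (E.pre σ')).2 hpre'⟩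
  subst hσσ'
  obtain ⟨Z, hZst, hV, hF, hB⟩ := hbis
  -- Bisimulation on the product models.
  set P := productUpdate x E σ hpre with hP
  set P' := productUpdate x' E σ hpre' with hP'
  let Z' : P.M.W → P'.M.W → Prop := fun p q => Z p.1.1 q.1.1 ∧ p.1.2 = q.1.2
  have hV' : ∀ p q, Z' p q → ∀ pr, P.M.V pr p ↔ P'.M.V pr q := by
    rintro ⟨⟨s, a⟩, hs⟩ ⟨⟨t, b⟩, ht⟩ ⟨hZ, hab⟩ pr
    simp only at hab; subst hab
    show (match E.post a pr with | some b => b = true | none => x.M.V pr s) ↔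
      (match E.post a pr with | some b => b = true | none => x'.M.V pr t)
    cases E.post a pr with
    | some b => rfl
    | none => exact hV s t hZ pr
  have hF' : ∀ p q, Z' p q → ∀ i p', P.M.R i p p' → ∃ q', P'.M.R i q q' ∧ Z' p' q' := by
    rintro ⟨⟨s, a⟩, hs⟩ ⟨⟨t, b⟩, ht⟩ ⟨hZ, hab⟩ i ⟨⟨s', a'⟩, hs'⟩ ⟨hRs, hRa⟩
    simp only at hab; subst hab
    obtain ⟨t', hRt, hZ'⟩ := hF s t hZ i s' hRs
    have ht' : x'.M.sat t' (E.pre a') := (bisim_sat Z hV hF hB _ s' t' hZ').1 hs'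
    exact ⟨⟨(t', a'), ht'⟩, ⟨hRt, hRa⟩, hZ', rfl⟩
  have hB' : ∀ p q, Z' p q → ∀ i q', P'.M.R i q q' → ∃ p', P.M.R i p p' ∧ Z' p' q' := by
    rintro ⟨⟨s, a⟩, hs⟩ ⟨⟨t, b⟩, ht⟩ ⟨hZ, hab⟩ i ⟨⟨t', a'⟩, ht'⟩ ⟨hRt, hRa⟩
    simp only at hab; subst hab
    obtain ⟨s', hRs, hZ'⟩ := hB s t hZ i t' hRt
    have hs' : x.M.sat s' (E.pre a') := (bisim_sat Z hV hF hB _ s' t' hZ').2 ht'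
    exact ⟨⟨(s', a'), hs'⟩, ⟨hRs, hRa⟩, hZ', rfl⟩
  have hme' : modEquiv P P' := by
    intro φ
    exact bisim_sat Z' hV' hF' hB' φ P.s P'.s ⟨hZst, rfl⟩
  exact ⟨hme', Quot.sound hme'⟩
end

section
/- Every clean map f on an L_Λ modal space X is continuous (indeed uniformly continuous) with respect to the Stone topology: for every formula φ, the preimage f^{-1}(U_φ) is open in the Stone topology. -/
/-! Each formula `φ` has a reduction: a family `g` of formulas indexed by the actions such that
executing `σ` makes `φ` true exactly where `g σ` held before. It is built by induction on `φ`
along the DEL reduction axioms; only the box case is delicate, where `□ᵢ φ` after `σ` says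
`□ᵢ (pre τ → g τ)` for every `τ` with `σ Rᵢ τ`. Since the preconditions take finitely many
values up to equivalence and (inductively) so do the reductions, this is a finite conjunction.
Then `f ⁻¹' U_φ` is the union over designated `σ` of `U_{pre σ} ∩ U_{g σ}`, an open set. -/

open Set

variable {Φ I : Type}

def Form.imp (φ ψ : Form Φ I) : Form Φ I := .neg (.and φ (.neg ψ))

noncomputable def Form.conj_s12 (C : Finset (Form Φ I)) : Form Φ I := C.toList.foldr .and .top

def Form.ofPost (p : Φ) : Option Bool → Form Φ I
  | some true => .top
  | some false => .neg .top
  | none => .atom p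

namespace KripkeModel

variable (M : KripkeModel Φ I) (v : M.W)

theorem sat_imp (φ ψ : Form Φ I) : M.sat v (φ.imp ψ) ↔ (M.sat v φ → M.sat v ψ) := by
  simp only [Form.imp, sat]
  tauto

theorem sat_foldr_and (L : List (Form Φ I)) :
    M.sat v (L.foldr .and .top) ↔ ∀ χ ∈ L, M.sat v χ := by
  induction L with
  | nil => simp [sat]
  | cons χ L ih => simp [sat, ih]

theorem sat_conj (C : Finset (Form Φ I)) : M.sat v (Form.conj_s12 C) ↔ ∀ χ ∈ C, M.sat v χ := by
  simp [Form.conj_s12, sat_foldr_and]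

theorem sat_ofPost (p : Φ) (o : Option Bool) :
    M.sat v (Form.ofPost p o) ↔ (match o with | some b => b = true | none => M.V p v) := by
  rcases o with _ | _ | _ <;> simp [Form.ofPost, sat]

end KripkeModel

theorem finite_range_comp₂ {α β γ δ : Type*} (op : α → β → γ) {a : δ → α} {b : δ → β}
    (ha : (range a).Finite) (hb : (range b).Finite) : (range fun d => op (a d) (b d)).Finite :=
  (ha.image2 op hb).subset <| range_subset_iff.2 fun d => mem_image2_of_mem ⟨d, rfl⟩ ⟨d, rfl⟩

theorem exists_conj_family {ι : Type*} (F : ι → Form Φ I) (hF : (range F).Finite) :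
    ∃ c : Set ι → Form Φ I, (range c).Finite ∧
      ∀ (s : Set ι) (M : KripkeModel Φ I) (v : M.W), M.sat v (c s) ↔ ∀ j ∈ s, M.sat v (F j) := by
  classical
  refine ⟨fun s => Form.conj_s12 (hF.toFinset.filter (· ∈ F '' s)), ?_, fun s M v => ?_⟩
  · refine ((hF.toFinset.powerset.finite_toSet).image Form.conj_s12).subset ?_
    rintro _ ⟨s, rfl⟩
    exact ⟨_, Finset.mem_powerset.2 (Finset.filter_subset _ _), rfl⟩
  · simp only [KripkeModel.sat_conj, Finset.mem_filter, Finite.mem_toFinset]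
    exact ⟨fun H j hj => H _ ⟨mem_range_self j, mem_image_of_mem F hj⟩,
      fun H _ ⟨_, j, hj, hFj⟩ => hFj ▸ H j hj⟩

section Reduction

variable (E : ActionModel Φ I)

def IsReduction (φ : Form Φ I) (g : E.A → Form Φ I) : Prop :=
  ∀ (M : KripkeModel Φ I) (v : M.W) (σ : E.A) (h : M.sat v (E.pre σ)),
    (productUpdate ⟨M, v⟩ E σ h).sat φ ↔ M.sat v (g σ)

theorem sat_productUpdate_box {M : KripkeModel Φ I} {v : M.W} {σ : E.A}
    (h : M.sat v (E.pre σ)) (i : I) (φ : Form Φ I) :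
    (productUpdate ⟨M, v⟩ E σ h).sat (.box i φ) ↔
      ∀ τ, E.R i σ τ → ∀ w, M.R i v w → ∀ hw : M.sat w (E.pre τ),
        (productUpdate ⟨M, w⟩ E τ hw).sat φ :=
  ⟨fun hb τ hτ w hw hwpre => hb ⟨(w, τ), hwpre⟩ ⟨hw, hτ⟩,
    fun hb ⟨⟨w, τ⟩, hwpre⟩ ⟨hw, hτ⟩ => hb τ hτ w hw hwpre⟩

theorem isReduction_top : IsReduction E .top fun _ => .top :=
  fun _ _ _ _ => Iff.rfl

theorem isReduction_atom (p : Φ) : IsReduction E (.atom p) fun σ => .ofPost p (E.post σ p) :=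
  fun M v _ _ => (M.sat_ofPost v p _).symm

variable {E}

theorem IsReduction.neg {φ : Form Φ I} {g : E.A → Form Φ I} (hg : IsReduction E φ g) :
    IsReduction E φ.neg fun σ => (g σ).neg :=
  fun M v σ h => not_congr (hg M v σ h)

theorem IsReduction.and {φ ψ : Form Φ I} {g k : E.A → Form Φ I} (hg : IsReduction E φ g)
    (hk : IsReduction E ψ k) : IsReduction E (φ.and ψ) fun σ => (g σ).and (k σ) :=
  fun M v σ h => and_congr (hg M v σ h) (hk M v σ h)

theorem IsReduction.exists_box {p g : E.A → Form Φ I} {φ : Form Φ I}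
    (hp_fin : (range p).Finite) (hp : ∀ τ (y : PointedModel Φ I), y.sat (E.pre τ) ↔ y.sat (p τ))
    (hg_fin : (range g).Finite) (hg : IsReduction E φ g) (i : I) :
    ∃ g' : E.A → Form Φ I, (range g').Finite ∧ IsReduction E (.box i φ) g' := by
  obtain ⟨c, hc_fin, hc⟩ := exists_conj_family (fun τ => Form.box i ((p τ).imp (g τ)))
    (finite_range_comp₂ (fun a b => Form.box i (a.imp b)) hp_fin hg_fin)
  refine ⟨fun σ => c {τ | E.R i σ τ}, hc_fin.subset (range_comp_subset_range _ c), ?_⟩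
  intro M v σ h
  simp only [sat_productUpdate_box, hc, mem_ofPred_eq, KripkeModel.sat, KripkeModel.sat_imp]
  refine forall₂_congr fun τ _ => forall₂_congr fun w _ => ?_
  exact ⟨fun H hw => (hg M w τ ((hp τ ⟨M, w⟩).2 hw)).1 (H _),
    fun H hw => (hg M w τ hw).2 (H ((hp τ ⟨M, w⟩).1 hw))⟩

theorem exists_isReduction
    (hprefin : ∃ S : Set (Form Φ I), S.Finite ∧ ∀ σ : E.A, ∃ ψ ∈ S,
      ∀ y : PointedModel Φ I, y.sat (E.pre σ) ↔ y.sat ψ) (φ : Form Φ I) :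
    ∃ g : E.A → Form Φ I, (range g).Finite ∧ IsReduction E φ g := by
  obtain ⟨S, hS_fin, hS⟩ := hprefin
  choose p hpS hp using hS
  have hp_fin : (range p).Finite := hS_fin.subset (range_subset_iff.2 hpS)
  induction φ with
  | top => exact ⟨_, finite_range_const, isReduction_top E⟩
  | atom a =>
    exact ⟨_, (finite_range (Form.ofPost a)).subset (range_comp_subset_range _ _),
      isReduction_atom E a⟩
  | neg φ ih =>
    obtain ⟨g, hg_fin, hg⟩ := ih
    exact ⟨_, (hg_fin.image Form.neg).subset (range_comp _ _).subset, hg.neg⟩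
  | and φ ψ ihφ ihψ =>
    obtain ⟨g, hg_fin, hg⟩ := ihφ
    obtain ⟨k, hk_fin, hk⟩ := ihψ
    exact ⟨_, finite_range_comp₂ _ hg_fin hk_fin, hg.and hk⟩
  | box i φ ih =>
    obtain ⟨g, hg_fin, hg⟩ := ih
    exact hg.exists_box hp_fin hp hg_fin i

end Reduction

theorem preimage_setOf_satQ {X : Set (PointedModel Φ I)} {E : ActionModel Φ I}
    (hex : Exhaustive X E)
    (hclosing : ∀ (x : PointedModel Φ I), x ∈ X → ∀ (σ : E.A), σ ∈ E.Γ →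
      ∀ hpre : x.M.sat x.s (E.pre σ), productUpdate x E σ hpre ∈ X)
    {f : MSpace X → MSpace X}
    (hf : ∀ (x : X) (σ : E.A), σ ∈ E.Γ → ∀ (hpre : x.1.M.sat x.1.s (E.pre σ))
      (hmem : productUpdate x.1 E σ hpre ∈ X),
      f (Quot.mk _ x) = Quot.mk _ (⟨productUpdate x.1 E σ hpre, hmem⟩ : X))
    {φ : Form Φ I} {g : E.A → Form Φ I} (hg : IsReduction E φ g) :
    f ⁻¹' {a | satQ φ a} = ⋃ σ ∈ E.Γ, {a | satQ (E.pre σ) a} ∩ {a | satQ (g σ) a} := by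
  ext a
  induction a using Quot.ind with
  | mk x =>
    have hsat : ∀ σ ∈ E.Γ, ∀ hpre : x.1.M.sat x.1.s (E.pre σ),
        satQ φ (f (Quot.mk _ x)) ↔ x.1.sat (g σ) := fun σ hσ hpre => by
      rw [hf x σ hσ hpre (hclosing x.1 x.2 σ hσ hpre)]
      exact hg x.1.M x.1.s σ hpre
    refine Iff.trans ?_ mem_iUnion₂.symm
    show satQ φ (f (Quot.mk _ x)) ↔ ∃ σ, ∃ _ : σ ∈ E.Γ, x.1.sat (E.pre σ) ∧ x.1.sat (g σ)
    constructor
    · intro hx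
      obtain ⟨σ, hσ, hpre⟩ := hex x.1 x.2
      exact ⟨σ, hσ, hpre, (hsat σ hσ hpre).1 hx⟩
    · rintro ⟨σ, hσ, hpre, hgσ⟩
      exact (hsat σ hσ hpre).2 hgσ

theorem stmt_12_general {Φ I : Type} (X : Set (PointedModel Φ I)) (E : ActionModel Φ I)
    (hex : Exhaustive X E)
    (hprefin : ∃ S : Set (Form Φ I), S.Finite ∧ ∀ σ : E.A, ∃ ψ ∈ S,
      ∀ y : PointedModel Φ I, y.sat (E.pre σ) ↔ y.sat ψ)
    (hclosing : ∀ (x : PointedModel Φ I), x ∈ X → ∀ (σ : E.A), σ ∈ E.Γ →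
      ∀ hpre : x.M.sat x.s (E.pre σ), productUpdate x E σ hpre ∈ X)
    (f : MSpace X → MSpace X)
    (hf : ∀ (x : X) (σ : E.A), σ ∈ E.Γ → ∀ (hpre : x.1.M.sat x.1.s (E.pre σ))
      (hmem : productUpdate x.1 E σ hpre ∈ X),
      f (Quot.mk _ x) = Quot.mk _ (⟨productUpdate x.1 E σ hpre, hmem⟩ : X)) :
    @Continuous _ _ (stoneTop X) (stoneTop X) f ∧
    ∀ φ : Form Φ I, (stoneTop X).IsOpen (f ⁻¹' {a : MSpace X | satQ φ a}) := by
  let _ : TopologicalSpace (MSpace X) := stoneTop X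
  have hbasic : ∀ ψ : Form Φ I, IsOpen {a : MSpace X | satQ ψ a} := fun ψ =>
    TopologicalSpace.isOpen_generateFrom_of_mem ⟨ψ, rfl⟩
  have hpreimage : ∀ φ : Form Φ I, IsOpen (f ⁻¹' {a : MSpace X | satQ φ a}) := by
    intro φ
    obtain ⟨g, -, hg⟩ := exists_isReduction hprefin φ
    rw [preimage_setOf_satQ hex hclosing hf hg]
    exact isOpen_biUnion fun σ _ => (hbasic _).inter (hbasic _)
  refine ⟨continuous_generateFrom_iff.2 ?_, hpreimage⟩
  rintro _ ⟨φ, rfl⟩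
  exact hpreimage φ

/-- Every clean map `f` on a modal space — induced via product update by
a precondition-finite multi-pointed action model that is closing, deterministic and
exhaustive over the underlying set of models — is continuous with respect to the
Stone topology; in particular the preimage of every basic open `U_φ` is open. -/
theorem stmt_12 {Φ I : Type} (X : Set (PointedModel Φ I)) (E : ActionModel Φ I)
    (hdet : Deterministic X E) (hex : Exhaustive X E)
    (hprefin : ∃ S : Set (Form Φ I), S.Finite ∧ ∀ σ : E.A, ∃ ψ ∈ S,
      ∀ y : PointedModel Φ I, y.sat (E.pre σ) ↔ y.sat ψ)
    (hclosing : ∀ (x : PointedModel Φ I), x ∈ X → ∀ (σ : E.A), σ ∈ E.Γ →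
      ∀ hpre : x.M.sat x.s (E.pre σ), productUpdate x E σ hpre ∈ X)
    (f : MSpace X → MSpace X)
    (hf : ∀ (x : X) (σ : E.A), σ ∈ E.Γ → ∀ (hpre : x.1.M.sat x.1.s (E.pre σ))
      (hmem : productUpdate x.1 E σ hpre ∈ X),
      f (Quot.mk _ x) = Quot.mk _ (⟨productUpdate x.1 E σ hpre, hmem⟩ : X)) :
    @Continuous _ _ (stoneTop X) (stoneTop X) f ∧
    ∀ φ : Form Φ I, (stoneTop X).IsOpen (f ⁻¹' {a : MSpace X | satQ φ a}) :=
  stmt_12_general X E hex hprefin hclosing f hf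
end
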